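/- arXiv:2601.11873 — 4 statements merged into one kernel-verified Lean document; each statement's English description precedes it below -/
import Mathlib

section
/- In a weakly dicomplemented lattice L, the center B(L) = {x ∈ L | x^Δ = x^∇} with the induced lattice operations and complement x' := x^Δ forms a Boolean algebra. -/
class WDL (L : Type*) [Lattice L] [BoundedOrder L] where
  delta : L → L
  nabla : L → L
  delta_delta_le : ∀ x : L, delta (delta x) ≤ x
  delta_antitone : ∀ x y : L, x ≤ y → delta y ≤ delta x
  meet_delta_eq : ∀ x y : L, (x ⊓ y) ⊔ (x ⊓ delta y) = x
  le_nabla_nabla : ∀ x : L, x ≤ nabla (nabla x)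
  nabla_antitone : ∀ x y : L, x ≤ y → nabla y ≤ nabla x
  join_nabla_eq : ∀ x y : L, (x ⊔ y) ⊓ (x ⊔ nabla y) = x

open WDL
/-- The Boolean center of a weakly dicomplemented lattice. -/
def Center (L : Type*) [Lattice L] [BoundedOrder L] [WDL L] : Set L :=
  {x | delta x = nabla x}

section Aux

variable {L : Type*} [Lattice L] [BoundedOrder L] [WDL L]

lemma wdl_le_delta {a y : L} (h : a ⊓ y = ⊥) : a ≤ delta y := by
  have hm := meet_delta_eq a y
  rw [h, bot_sup_eq] at hm
  exact inf_eq_left.mp hm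

lemma wdl_nabla_le {a y : L} (h : a ⊔ y = ⊤) : nabla y ≤ a := by
  have hm := join_nabla_eq a y
  rw [h, top_inf_eq] at hm
  exact sup_eq_left.mp hm

lemma wdl_sup_delta (y : L) : y ⊔ delta y = ⊤ := by
  simpa using meet_delta_eq (⊤ : L) y

lemma wdl_inf_nabla (y : L) : y ⊓ nabla y = ⊥ := by
  simpa using join_nabla_eq (⊥ : L) y

lemma wdl_nabla_le_delta (y : L) : nabla y ≤ delta y :=
  wdl_le_delta (by rw [inf_comm]; exact wdl_inf_nabla y)

variable {x : L}

lemma cen_inf (hx : x ∈ Center L) : x ⊓ delta x = ⊥ := by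
  rw [show delta x = nabla x from hx]; exact wdl_inf_nabla x

lemma cen_dd (hx : x ∈ Center L) : delta (delta x) = x :=
  le_antisymm (delta_delta_le x) (wdl_le_delta (cen_inf hx))

lemma cen_nd (hx : x ∈ Center L) : nabla (delta x) = x := by
  refine le_antisymm (wdl_nabla_le (wdl_sup_delta x)) ?_
  rw [show delta x = nabla x from hx]
  exact le_nabla_nabla x

lemma cen_delta_mem (hx : x ∈ Center L) : delta x ∈ Center L := by
  show delta (delta x) = nabla (delta x)
  rw [cen_dd hx, cen_nd hx]

/-- join-injectivity for central elements -/
lemma cen_jinj (hx : x ∈ Center L) {c d : L} (h1 : c ⊔ x = d ⊔ x)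
    (h2 : c ⊔ delta x = d ⊔ delta x) : c = d := by
  have hc := join_nabla_eq c x
  have hd := join_nabla_eq d x
  rw [← show delta x = nabla x from hx] at hc hd
  rw [h1, h2, hd] at hc
  exact hc.symm

/-- meet-injectivity for central elements -/
lemma cen_minj (hx : x ∈ Center L) {c d : L} (h1 : c ⊓ x = d ⊓ x)
    (h2 : c ⊓ delta x = d ⊓ delta x) : c = d := by
  have hc := meet_delta_eq c x
  have hd := meet_delta_eq d x
  rw [h1, h2, hd] at hc
  exact hc.symm

lemma cen_modA (hx : x ∈ Center L) (b : L) : x ⊓ (delta x ⊔ b) ≤ b := by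
  have key : b ⊔ (x ⊓ (delta x ⊔ b)) = b := by
    refine cen_jinj hx ?_ ?_
    · refine le_antisymm (sup_le (sup_le le_sup_left
        (le_trans inf_le_left le_sup_right)) le_sup_right) ?_
      exact sup_le (le_sup_of_le_left le_sup_left) le_sup_right
    · refine le_antisymm (sup_le (sup_le le_sup_left
        (le_trans inf_le_right (sup_le le_sup_right le_sup_left))) le_sup_right) ?_
      exact sup_le (le_sup_of_le_left le_sup_left) le_sup_right
  calc x ⊓ (delta x ⊔ b) ≤ b ⊔ (x ⊓ (delta x ⊔ b)) := le_sup_right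
    _ = b := key

lemma cen_modB (hx : x ∈ Center L) (b : L) : b ≤ x ⊔ (delta x ⊓ b) := by
  have key : b ⊓ (x ⊔ (delta x ⊓ b)) = b := by
    refine cen_minj hx ?_ ?_
    · refine le_antisymm (inf_le_inf_right _ inf_le_left) ?_
      exact le_inf (le_inf inf_le_left (le_sup_of_le_left inf_le_right)) inf_le_right
    · refine le_antisymm (inf_le_inf_right _ inf_le_left) ?_
      refine le_inf (le_inf inf_le_left ?_) inf_le_right
      exact le_sup_of_le_right (le_inf inf_le_right inf_le_left)
  calc b = b ⊓ (x ⊔ (delta x ⊓ b)) := key.symm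
    _ ≤ x ⊔ (delta x ⊓ b) := inf_le_right

lemma cen_inf_mem {y : L} (hx : x ∈ Center L) (hy : y ∈ Center L) :
    x ⊓ y ∈ Center L := by
  set c := delta x ⊔ delta y with hcdef
  have hzc : (x ⊓ y) ⊓ c = ⊥ := by
    have h1 : (x ⊓ y) ⊓ c ≤ delta y :=
      le_trans (inf_le_inf_right _ inf_le_left) (cen_modA hx (delta y))
    have h2 : (x ⊓ y) ⊓ c ≤ y := le_trans inf_le_left inf_le_right
    exact le_bot_iff.mp (le_trans (le_inf h2 h1) (cen_inf hy).le)
  have h1 : x ⊓ y ≤ delta c := wdl_le_delta hzc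
  have h2 : delta c ≤ x ⊓ y := by
    refine le_inf ?_ ?_
    · exact le_trans (delta_antitone _ _ le_sup_left) (cen_dd hx).le
    · exact le_trans (delta_antitone _ _ le_sup_right) (cen_dd hy).le
  have hc : delta c = x ⊓ y := le_antisymm h2 h1
  have h3 : delta (x ⊓ y) ≤ c := by rw [← hc]; exact delta_delta_le c
  have h4 : c ≤ nabla (x ⊓ y) := by
    refine sup_le ?_ ?_
    · rw [show delta x = nabla x from hx]
      exact nabla_antitone _ _ inf_le_left
    · rw [show delta y = nabla y from hy]
      exact nabla_antitone _ _ inf_le_right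
  exact le_antisymm (h3.trans h4) (wdl_nabla_le_delta _)

lemma cen_sup_mem {y : L} (hx : x ∈ Center L) (hy : y ∈ Center L) :
    x ⊔ y ∈ Center L := by
  set c := delta x ⊓ delta y with hcdef
  have h1 : delta (x ⊔ y) ≤ c :=
    le_inf (delta_antitone _ _ le_sup_left) (delta_antitone _ _ le_sup_right)
  have hzc : (x ⊔ y) ⊔ c = ⊤ := by
    have hb : delta y ≤ x ⊔ c := cen_modB hx (delta y)
    have : (⊤ : L) ≤ (x ⊔ y) ⊔ c := by
      rw [← wdl_sup_delta y]
      refine sup_le (le_sup_of_le_left le_sup_right) ?_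
      refine le_trans hb (sup_le (le_sup_of_le_left le_sup_left) le_sup_right)
    exact le_antisymm le_top this
  have h2 : nabla c ≤ x ⊔ y := wdl_nabla_le hzc
  have h3 : x ⊔ y ≤ nabla c := by
    refine sup_le ?_ ?_
    · exact le_trans (cen_nd hx).ge (nabla_antitone _ _ inf_le_left)
    · exact le_trans (cen_nd hy).ge (nabla_antitone _ _ inf_le_right)
  have hc : nabla c = x ⊔ y := le_antisymm h2 h3
  have h4 : c ≤ nabla (x ⊔ y) := by rw [← hc]; exact le_nabla_nabla c
  exact le_antisymm (h1.trans h4) (wdl_nabla_le_delta _)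

lemma cen_bot_mem : (⊥ : L) ∈ Center L := by
  have hd : delta (⊥ : L) = ⊤ := by simpa using wdl_sup_delta (⊥ : L)
  have ht : nabla (⊤ : L) = ⊥ := by simpa using wdl_inf_nabla (⊤ : L)
  have hn : nabla (⊥ : L) = ⊤ := by
    refine le_antisymm le_top ?_
    rw [← ht]; exact le_nabla_nabla ⊤
  show delta (⊥ : L) = nabla (⊥ : L)
  rw [hd, hn]

lemma cen_top_mem : (⊤ : L) ∈ Center L := by
  have hd : delta (⊥ : L) = ⊤ := by simpa using wdl_sup_delta (⊥ : L)
  have ht : nabla (⊤ : L) = ⊥ := by simpa using wdl_inf_nabla (⊤ : L)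
  have hdt : delta (⊤ : L) = ⊥ := by
    refine le_antisymm ?_ bot_le
    rw [← hd]; exact delta_delta_le ⊥
  show delta (⊤ : L) = nabla (⊤ : L)
  rw [hdt, ht]

lemma cen_distrib (hx : x ∈ Center L) (y z : L) :
    x ⊓ (y ⊔ z) = (x ⊓ y) ⊔ (x ⊓ z) := by
  set v := (x ⊓ y) ⊔ (x ⊓ z) with hvdef
  refine le_antisymm ?_ (sup_le (le_inf inf_le_left (le_trans inf_le_right le_sup_left))
    (le_inf inf_le_left (le_trans inf_le_right le_sup_right)))
  have hy : y ≤ delta x ⊔ v := by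
    conv_lhs => rw [← meet_delta_eq y x]
    refine sup_le ?_ ?_
    · exact le_sup_of_le_right (le_sup_of_le_left (inf_comm y x ▸ le_refl _))
    · exact le_sup_of_le_left inf_le_right
  have hz : z ≤ delta x ⊔ v := by
    conv_lhs => rw [← meet_delta_eq z x]
    refine sup_le ?_ ?_
    · exact le_sup_of_le_right (le_sup_of_le_right (inf_comm z x ▸ le_refl _))
    · exact le_sup_of_le_left inf_le_right
  calc x ⊓ (y ⊔ z) ≤ x ⊓ (delta x ⊔ v) := inf_le_inf_left x (sup_le hy hz)
    _ ≤ v := cen_modA hx v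

end Aux

/-- The center `B(L)`, with the induced lattice operations, bounds, and complement
`x' := x^Δ`, is a Boolean algebra. -/
theorem wdl_center_boolean (L : Type*) [Lattice L] [BoundedOrder L] [WDL L] :
    -- closure of the operations
    (∀ x ∈ Center L, ∀ y ∈ Center L, x ⊓ y ∈ Center L) ∧
    (∀ x ∈ Center L, ∀ y ∈ Center L, x ⊔ y ∈ Center L) ∧
    (∀ x ∈ Center L, delta x ∈ Center L) ∧
    (⊥ : L) ∈ Center L ∧ (⊤ : L) ∈ Center L ∧
    -- distributivity on the center
    (∀ x ∈ Center L, ∀ y ∈ Center L, ∀ z ∈ Center L,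
      x ⊓ (y ⊔ z) = (x ⊓ y) ⊔ (x ⊓ z)) ∧
    -- complementation laws
    (∀ x ∈ Center L, x ⊔ delta x = ⊤) ∧
    (∀ x ∈ Center L, x ⊓ delta x = ⊥) ∧
    -- involution
    (∀ x ∈ Center L, delta (delta x) = x) := by
  refine ⟨fun x hx y hy => cen_inf_mem hx hy,
    fun x hx y hy => cen_sup_mem hx hy,
    fun x hx => cen_delta_mem hx,
    cen_bot_mem, cen_top_mem,
    fun x hx y _ z _ => cen_distrib hx y z,
    fun x _ => wdl_sup_delta x,
    fun x hx => cen_inf hx,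
    fun x hx => cen_dd hx⟩
end

section
/- A weakly dicomplemented lattice L satisfies the identity x = x^Δ∇ for all x if and only if L equals its Boolean center B(L) = {x ∈ L | x^Δ = x^∇}. -/
open WDL
theorem wdl_deltaNabla_identity_iff_center (L : Type*) [Lattice L] [BoundedOrder L] [WDL L] :
    (∀ x : L, nabla (delta x) = x) ↔ (∀ x : L, delta x = nabla x) := by
  constructor
  · intro h x
    -- delta is injective
    have hinj : Function.Injective (delta : L → L) := by
      intro a b hab
      have := congrArg nabla hab
      rwa [h a, h b] at this
    -- delta (delta (delta x)) = delta x
    have h3 : delta (delta (delta x)) = delta x :=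
      le_antisymm (delta_delta_le (delta x))
        (delta_antitone _ _ (delta_delta_le x))
    have hdd : delta (delta x) = x := hinj h3
    conv_rhs => rw [← hdd]
    exact (h (delta x)).symm
  · intro h x
    apply le_antisymm
    · have : nabla (delta x) = delta (delta x) := (h (delta x)).symm
      rw [this]; exact delta_delta_le x
    · rw [h x]; exact le_nabla_nabla x
end

section
/- Let L be a weakly dicomplemented lattice, F a normal filter, and J a normal ideal. Define J(F) := {z ∈ L | z ≤ x^∇ for some x ∈ F} and F(J) := {z ∈ L | z ≥ x^Δ for some x ∈ J}. Then F = F(J(F)) and J = J(F(J)); consequently the map F ↦ J(F) is a bijection from normal filters to normal ideals with inverse J ↦ F(J). -/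
open WDL
/-- Normal filter: nonempty, upward closed, closed under `⊓` and `x ↦ x^Δ∇`. -/
def IsNormalFilter (L : Type*) [Lattice L] [BoundedOrder L] [WDL L] (F : Set L) : Prop :=
  F.Nonempty ∧ (∀ x ∈ F, ∀ y, x ≤ y → y ∈ F) ∧ (∀ x ∈ F, ∀ y ∈ F, x ⊓ y ∈ F) ∧
    (∀ x ∈ F, nabla (delta x) ∈ F)

/-- Normal ideal: nonempty, downward closed, closed under `⊔` and `x ↦ x^∇Δ`. -/
def IsNormalIdeal (L : Type*) [Lattice L] [BoundedOrder L] [WDL L] (I : Set L) : Prop :=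
  I.Nonempty ∧ (∀ x ∈ I, ∀ y, y ≤ x → y ∈ I) ∧ (∀ x ∈ I, ∀ y ∈ I, x ⊔ y ∈ I) ∧
    (∀ x ∈ I, delta (nabla x) ∈ I)

def JofF (L : Type*) [Lattice L] [BoundedOrder L] [WDL L] (F : Set L) : Set L :=
  {z | ∃ x ∈ F, z ≤ nabla x}

def FofJ (L : Type*) [Lattice L] [BoundedOrder L] [WDL L] (J : Set L) : Set L :=
  {z | ∃ x ∈ J, delta x ≤ z}


section Aux
variable {L : Type*} [Lattice L] [BoundedOrder L] [WDL L]

lemma meet_nabla_bot (x : L) : x ⊓ nabla x = ⊥ := by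
  have h := join_nabla_eq (⊥ : L) x
  simpa using h

lemma nabla_le_delta (x : L) : nabla x ≤ delta x := by
  have h := meet_delta_eq (nabla x) x
  have h0 : nabla x ⊓ x = ⊥ := by rw [inf_comm]; exact meet_nabla_bot x
  rw [h0, bot_sup_eq] at h
  calc nabla x = nabla x ⊓ delta x := h.symm
    _ ≤ delta x := inf_le_right

lemma le_nabla_of_mem {z x : L} (h : z ≤ nabla x) : x ≤ nabla z :=
  le_trans (le_nabla_nabla x) (nabla_antitone _ _ h)

end Aux

theorem wdl_normal_filter_ideal_bijection (L : Type*) [Lattice L] [BoundedOrder L] [WDL L] :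
    (∀ F : Set L, IsNormalFilter L F → IsNormalIdeal L (JofF L F)) ∧
    (∀ J : Set L, IsNormalIdeal L J → IsNormalFilter L (FofJ L J)) ∧
    (∀ F : Set L, IsNormalFilter L F → FofJ L (JofF L F) = F) ∧
    (∀ J : Set L, IsNormalIdeal L J → JofF L (FofJ L J) = J) ∧
    Set.BijOn (JofF L) {F : Set L | IsNormalFilter L F} {J : Set L | IsNormalIdeal L J} ∧
    Set.InvOn (FofJ L) (JofF L) {F : Set L | IsNormalFilter L F}
      {J : Set L | IsNormalIdeal L J} := by
  -- part 1
  have p1 : ∀ F : Set L, IsNormalFilter L F → IsNormalIdeal L (JofF L F) := by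
    intro F ⟨⟨a, ha⟩, hup, hmeet, hnd⟩
    refine ⟨⟨nabla a, a, ha, le_rfl⟩, ?_, ?_, ?_⟩
    · rintro x ⟨w, hw, hx⟩ y hy; exact ⟨w, hw, hy.trans hx⟩
    · rintro x ⟨w, hw, hx⟩ y ⟨v, hv, hy⟩
      refine ⟨w ⊓ v, hmeet w hw v hv, sup_le ?_ ?_⟩
      · exact hx.trans (nabla_antitone _ _ inf_le_left)
      · exact hy.trans (nabla_antitone _ _ inf_le_right)
    · rintro x ⟨w, hw, hx⟩
      refine ⟨nabla (delta w), hnd w hw, ?_⟩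
      have h1 : delta (nabla x) ≤ delta w :=
        delta_antitone _ _ (le_nabla_of_mem hx)
      exact h1.trans (le_nabla_nabla _)
  -- part 2
  have p2 : ∀ J : Set L, IsNormalIdeal L J → IsNormalFilter L (FofJ L J) := by
    intro J ⟨⟨a, ha⟩, hdn, hjoin, hdn2⟩
    refine ⟨⟨delta a, a, ha, le_rfl⟩, ?_, ?_, ?_⟩
    · rintro x ⟨w, hw, hx⟩ y hy; exact ⟨w, hw, hx.trans hy⟩
    · rintro x ⟨w, hw, hx⟩ y ⟨v, hv, hy⟩
      refine ⟨w ⊔ v, hjoin w hw v hv, le_inf ?_ ?_⟩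
      · exact (delta_antitone _ _ le_sup_left).trans hx
      · exact (delta_antitone _ _ le_sup_right).trans hy
    · rintro x ⟨w, hw, hx⟩
      refine ⟨delta (nabla w), hdn2 w hw, ?_⟩
      have h1 : delta x ≤ w := (delta_antitone _ _ hx).trans (delta_delta_le w)
      exact (delta_delta_le (nabla w)).trans (nabla_antitone _ _ h1)
  -- part 3
  have p3 : ∀ F : Set L, IsNormalFilter L F → FofJ L (JofF L F) = F := by
    intro F hF
    obtain ⟨hne, hup, hmeet, hnd⟩ := hF
    apply Set.eq_of_subset_of_subset
    · rintro z ⟨y, ⟨x, hx, hy⟩, hz⟩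
      have h1 : delta (nabla x) ≤ delta y := delta_antitone _ _ hy
      have h2 : x ≤ delta (nabla x) :=
        (le_nabla_nabla x).trans (nabla_le_delta (nabla x))
      exact hup x hx z (h2.trans (h1.trans hz))
    · intro x hx
      refine ⟨nabla (nabla (delta x)), ⟨nabla (delta x), hnd x hx, le_rfl⟩, ?_⟩
      have h1 : delta x ≤ nabla (nabla (delta x)) := le_nabla_nabla _
      have h2 : delta (nabla (nabla (delta x))) ≤ delta (delta x) :=
        delta_antitone _ _ h1
      exact h2.trans (delta_delta_le x)
  -- part 4
  have p4 : ∀ J : Set L, IsNormalIdeal L J → JofF L (FofJ L J) = J := by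
    intro J hJ
    obtain ⟨hne, hdn, hjoin, hdn2⟩ := hJ
    apply Set.eq_of_subset_of_subset
    · rintro z ⟨y, ⟨x, hx, hy⟩, hz⟩
      have h1 : nabla y ≤ nabla (delta x) := nabla_antitone _ _ hy
      have h2 : nabla (delta x) ≤ x := (nabla_le_delta (delta x)).trans (delta_delta_le x)
      exact hdn x hx z (hz.trans (h1.trans h2))
    · intro x hx
      refine ⟨delta (delta (nabla x)), ⟨delta (nabla x), hdn2 x hx, le_rfl⟩, ?_⟩
      have h1 : delta (delta (nabla x)) ≤ nabla x := delta_delta_le _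
      have h2 : nabla (nabla x) ≤ nabla (delta (delta (nabla x))) := nabla_antitone _ _ h1
      exact (le_nabla_nabla x).trans h2
  refine ⟨p1, p2, p3, p4, ?_, ?_, ?_⟩
  · refine ⟨fun F hF => p1 F hF, fun F hF G hG h => ?_, fun J hJ => ?_⟩
    · rw [← p3 F hF, ← p3 G hG, h]
    · exact ⟨FofJ L J, p2 J hJ, p4 J hJ⟩
  · intro F hF; exact p3 F hF
  · intro J hJ; exact p4 J hJ
end

section
/- Let L be a distributive weakly dicomplemented lattice and F₁, F₂ normal filters of L. Then the congruences θ_{F₁} and θ_{F₂} permute: θ_{F₁} ∘ θ_{F₂} = θ_{F₂} ∘ θ_{F₁}, where θ_F := {(x, y) | ∃ u ∈ F, x ∨ u^Δ = y ∨ u^Δ}. -/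
open WDL
private lemma wdl_perm_aux {L : Type*} [DistribLattice L] {x z y a b : L}
    (hxz : x ⊔ a = z ⊔ a) (hzy : z ⊔ b = y ⊔ b) :
    x ⊔ b = ((x ⊔ b) ⊓ (y ⊔ a)) ⊔ b ∧ ((x ⊔ b) ⊓ (y ⊔ a)) ⊔ a = y ⊔ a := by
  have hx : x ≤ y ⊔ a ⊔ b := by
    have : x ≤ z ⊔ a := by rw [← hxz]; exact le_sup_left
    calc x ≤ z ⊔ a := this
    _ ≤ (y ⊔ b) ⊔ a := by
        have : z ≤ y ⊔ b := by rw [← hzy]; exact le_sup_left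
        exact sup_le_sup_right this a
    _ = y ⊔ a ⊔ b := by rw [sup_right_comm]
  have hy : y ≤ x ⊔ a ⊔ b := by
    have : y ≤ z ⊔ b := by rw [hzy]; exact le_sup_left
    calc y ≤ z ⊔ b := this
    _ ≤ (x ⊔ a) ⊔ b := by
        have : z ≤ x ⊔ a := by rw [hxz]; exact le_sup_left
        exact sup_le_sup_right this b
  constructor
  · rw [sup_inf_right]
    have h1 : (x ⊔ b) ⊔ b = x ⊔ b := by rw [sup_assoc, sup_idem]
    have h2 : x ⊔ b ≤ (y ⊔ a) ⊔ b := by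
      apply sup_le _ le_sup_right
      calc x ≤ y ⊔ a ⊔ b := hx
      _ = (y ⊔ a) ⊔ b := rfl
    rw [h1, inf_eq_left.mpr h2]
  · rw [sup_inf_right]
    have h1 : (y ⊔ a) ⊔ a = y ⊔ a := by rw [sup_assoc, sup_idem]
    have h2 : y ⊔ a ≤ (x ⊔ b) ⊔ a := by
      apply sup_le _ le_sup_right
      calc y ≤ x ⊔ a ⊔ b := hy
      _ = (x ⊔ b) ⊔ a := by rw [sup_right_comm]
    rw [h1, inf_eq_right.mpr h2]

/-- In a distributive WDL, the congruences generated by normal filters permute. -/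
theorem wdl_theta_F_permute (L : Type*) [DistribLattice L] [BoundedOrder L] [WDL L]
    (F₁ F₂ : Set L) (h₁ : IsNormalFilter L F₁) (h₂ : IsNormalFilter L F₂) :
    let t : Set L → L → L → Prop := fun F x y => ∃ u ∈ F, x ⊔ delta u = y ⊔ delta u
    ∀ x y : L, (∃ z, t F₁ x z ∧ t F₂ z y) ↔ (∃ z, t F₂ x z ∧ t F₁ z y) := by
  intro t x y
  constructor
  · rintro ⟨z, ⟨u, hu, hxz⟩, ⟨v, hv, hzy⟩⟩
    obtain ⟨e1, e2⟩ := wdl_perm_aux hxz hzy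
    exact ⟨(x ⊔ delta v) ⊓ (y ⊔ delta u), ⟨v, hv, e1⟩, ⟨u, hu, e2⟩⟩
  · rintro ⟨z, ⟨v, hv, hxz⟩, ⟨u, hu, hzy⟩⟩
    obtain ⟨e1, e2⟩ := wdl_perm_aux hxz hzy
    exact ⟨(x ⊔ delta u) ⊓ (y ⊔ delta v), ⟨u, hu, e1⟩, ⟨v, hv, e2⟩⟩
end
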